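/- arXiv:2309.16847 — 2 statements merged into one kernel-verified Lean document; each statement's English description precedes it below -/
import Mathlib

section
/- Let F be a tower of homogeneous forms in k[x_1,...,x_n] of degrees d_1,...,d_h with maximum degree d. If the polarized tower F̃ is (2^d·A, B, t)-regular, then F is (A, B, t)-regular. -/
/-
Polarizing with respect to a fixed set `E₀ ⊆ [d]` of `deg i` slots is linear, satisfies the
Leibniz rule `f g ↦ ∑_{E₁ ⊆ E₀} f̃_{E₁} · g̃_{E₀ \ E₁}`, and kills forms whose degree is not
`|E₀|`. Hence it maps the ideal of the earlier layers into the ideal of their polarizations and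
turns a sum of `r` products of forms into a sum of at most `2^d r` such products. A nonzero
combination `∑ aⱼ fᵢⱼ` of rank `≤ A (mᵢ + ⋯ + m_h + t)^B` relative to `I(F_{<i})` thus yields the
nonzero combination `∑ aⱼ f̃ᵢⱼ,E₀` of rank `≤ 2^d A (m̃ᵢ + ⋯ + m̃_h + t)^B` relative to `I(F̃_{<i})`,
since the polarized layers are at least as large as the original ones.
-/

open MvPolynomial

/-- `f` is a sum of `r` products of forms of positive degrees summing to `d`. -/
def SRankLE {k : Type*} [Field k] {σ : Type*} (f : MvPolynomial σ k) (d r : ℕ) : Prop :=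
  ∃ g h : Fin r → MvPolynomial σ k,
    (∀ i, ∃ a b : ℕ, 0 < a ∧ 0 < b ∧ a + b = d ∧
      (g i).IsHomogeneous a ∧ (h i).IsHomogeneous b) ∧
    f = ∑ i, g i * h i

/-- Relative rank at most `r` on the ideal `I`. -/
def SRankRelLE {k : Type*} [Field k] {σ : Type*} (I : Ideal (MvPolynomial σ k))
    (f : MvPolynomial σ k) (d r : ℕ) : Prop :=
  ∃ q ∈ I, q.IsHomogeneous d ∧ SRankLE (f + q) d r

/-- Every nonzero linear combination of the collection `F` has relative rank `> r`
on the ideal `I`. -/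
def CollRegularGT {k : Type*} [Field k] {σ ι : Type*} [Fintype ι]
    (I : Ideal (MvPolynomial σ k)) (F : ι → MvPolynomial σ k) (d r : ℕ) : Prop :=
  ∀ a : ι → k, a ≠ 0 → ¬ SRankRelLE I (∑ j, C (a j) * F j) d r

/-- A tower with layers indexed by `ι i` of common degree `deg i` is `(A,B,t)`-regular:
every layer has relative rank `> A·(mᵢ + ⋯ + m_h + t)^B` on the ideal generated by the
earlier layers. -/
def TowerRegular {k : Type*} [Field k] {σ : Type*} {h : ℕ} (ι : Fin h → Type)
    [∀ i, Fintype (ι i)] (deg : Fin h → ℕ)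
    (F : (i : Fin h) → ι i → MvPolynomial σ k) (A B t : ℕ) : Prop :=
  ∀ i : Fin h,
    CollRegularGT (Ideal.span {p | ∃ (i' : Fin h) (j : ι i'), i' < i ∧ p = F i' j})
      (F i) (deg i)
      (A * ((∑ i' ∈ Finset.univ.filter (fun i' => i ≤ i'), Fintype.card (ι i')) + t) ^ B)

/-- The polarization of a form `f` of degree `e` with respect to a subset
`E ⊆ [d]` with `|E| = e`: substitute `xⱼ ↦ ∑_{s ∈ [d]} v_s(j)` and take the component
which is multilinear in the slots of `E` (degree 1 in each `v_s`, `s ∈ E`, degree 0 in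
the others), i.e. `f̃((v_s)_{s ∈ E}) = ∇_{v_{s₁}} ⋯ ∇_{v_{s_e}} f(0)`. -/
noncomputable def polarize {k : Type*} [Field k] {n : ℕ} (d : ℕ) (E : Finset (Fin d))
    (f : MvPolynomial (Fin n) k) : MvPolynomial (Fin d × Fin n) k :=
  weightedHomogeneousComponent
    (fun p : Fin d × Fin n => (Pi.single p.1 1 : Fin d → ℕ))
    (fun s => if s ∈ E then 1 else 0)
    (aeval (fun j : Fin n => ∑ s : Fin d, X (s, j)) f)

namespace Polarization

variable {k : Type*} [Field k] {n d : ℕ}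

def indicator (E : Finset (Fin d)) : Fin d → ℕ := fun s => if s ∈ E then 1 else 0

/-- Weighted degrees for `slotWeight d n` are multidegrees in the slots `v_s = (X (s, j))_j`. -/
def slotWeight (d n : ℕ) : Fin d × Fin n → Fin d → ℕ := fun p => Pi.single p.1 1

lemma indicator_injective : Function.Injective (indicator (d := d)) := by
  intro E₁ E₂ h
  ext s
  have hs := congrFun h s
  simp only [indicator] at hs
  split_ifs at hs <;> simp_all

lemma add_eq_indicator_iff {u v : Fin d → ℕ} {E : Finset (Fin d)} :
    u + v = indicator E ↔ ∃ E₁ ⊆ E, u = indicator E₁ ∧ v = indicator (E \ E₁) := by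
  constructor
  · intro h
    refine ⟨E.filter (fun s => u s = 1), Finset.filter_subset _ _, funext fun s => ?_,
      funext fun s => ?_⟩ <;>
    · have hs := congrFun h s
      simp only [Pi.add_apply, indicator] at hs
      simp only [indicator, Finset.mem_sdiff, Finset.mem_filter]
      split_ifs at hs ⊢ <;> grind
  · rintro ⟨E₁, hE₁, rfl, rfl⟩
    funext s
    simp only [Pi.add_apply, indicator, Finset.mem_sdiff]
    by_cases h₁ : s ∈ E₁
    · simp [h₁, hE₁ h₁]
    · split_ifs <;> simp_all

lemma sum_powerset_ite_indicator {M : Type*} [AddCommMonoid M] (u v : Fin d → ℕ)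
    (E : Finset (Fin d)) (c : M) :
    ∑ E₁ ∈ E.powerset, (if u = indicator E₁ ∧ v = indicator (E \ E₁) then c else 0) =
      if u + v = indicator E then c else 0 := by
  split_ifs with h
  · obtain ⟨E₀, hE₀, hu, hv⟩ := add_eq_indicator_iff.mp h
    rw [Finset.sum_eq_single_of_mem E₀ (Finset.mem_powerset.mpr hE₀), if_pos ⟨hu, hv⟩]
    rintro E₁ - hne
    exact if_neg fun ⟨hu', _⟩ => hne (indicator_injective (hu'.symm.trans hu))
  · exact Finset.sum_eq_zero fun E₁ hE₁ => if_neg fun ⟨hu, hv⟩ =>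
      h (add_eq_indicator_iff.mpr ⟨E₁, Finset.mem_powerset.mp hE₁, hu, hv⟩)

lemma weightedHomogeneousComponent_indicator_mul (E : Finset (Fin d))
    (P Q : MvPolynomial (Fin d × Fin n) k) :
    weightedHomogeneousComponent (slotWeight d n) (indicator E) (P * Q) =
      ∑ E₁ ∈ E.powerset, weightedHomogeneousComponent (slotWeight d n) (indicator E₁) P *
        weightedHomogeneousComponent (slotWeight d n) (indicator (E \ E₁)) Q := by
  ext m
  simp only [coeff_weightedHomogeneousComponent, coeff_sum, coeff_mul, ite_zero_mul_ite_zero]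
  rw [Finset.sum_comm, Finset.ite_sum_zero]
  refine Finset.sum_congr rfl fun x hx => ?_
  rw [sum_powerset_ite_indicator, ← map_add, Finset.HasAntidiagonal.mem_antidiagonal.mp hx]

noncomputable def sumSlots (d : ℕ) :
    MvPolynomial (Fin n) k →ₐ[k] MvPolynomial (Fin d × Fin n) k :=
  aeval fun j => ∑ s, X (s, j)

lemma isHomogeneous_sumSlots {f : MvPolynomial (Fin n) k} {m : ℕ} (hf : f.IsHomogeneous m) :
    (sumSlots (k := k) d f).IsHomogeneous m := by
  have h := hf.aeval (fun j => ∑ s, (X (s, j) : MvPolynomial (Fin d × Fin n) k))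
    fun j => IsHomogeneous.sum _ _ 1 fun s _ => isHomogeneous_X k _
  rwa [one_mul] at h

lemma sum_weight_slotWeight (e : (Fin d × Fin n) →₀ ℕ) :
    ∑ s, Finsupp.weight (slotWeight d n) e s = e.degree := by
  simp only [Finsupp.weight_apply, Finsupp.sum, Finset.sum_apply, Pi.smul_apply, slotWeight,
    smul_eq_mul, Finsupp.degree]
  rw [Finset.sum_comm]
  refine Finset.sum_congr rfl fun p _ => ?_
  simp [Pi.single_apply]

lemma sum_indicator (E : Finset (Fin d)) : ∑ s, indicator E s = E.card := by
  simp [indicator, Finset.sum_ite_mem]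

end Polarization

open Polarization

section

variable {k : Type*} [Field k] {n d : ℕ}

lemma polarize_eq (E : Finset (Fin d)) (f : MvPolynomial (Fin n) k) :
    polarize d E f =
      weightedHomogeneousComponent (slotWeight d n) (indicator E) (sumSlots d f) := rfl

lemma polarize_zero (E : Finset (Fin d)) : polarize d E (0 : MvPolynomial (Fin n) k) = 0 := by
  simp only [polarize_eq, map_zero]

lemma polarize_add (E : Finset (Fin d)) (f g : MvPolynomial (Fin n) k) :
    polarize d E (f + g) = polarize d E f + polarize d E g := by
  simp only [polarize_eq, map_add]

lemma polarize_sum {ι : Type*} (s : Finset ι) (f : ι → MvPolynomial (Fin n) k)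
    (E : Finset (Fin d)) :
    polarize d E (∑ i ∈ s, f i) = ∑ i ∈ s, polarize d E (f i) := by
  simp only [polarize_eq, map_sum]

lemma polarize_C_mul (E : Finset (Fin d)) (c : k) (f : MvPolynomial (Fin n) k) :
    polarize d E (C c * f) = C c * polarize d E f := by
  simp only [polarize_eq, C_mul', map_smul]

lemma polarize_mul (E : Finset (Fin d)) (f g : MvPolynomial (Fin n) k) :
    polarize d E (f * g) =
      ∑ E₁ ∈ E.powerset, polarize d E₁ f * polarize d (E \ E₁) g := by
  simp only [polarize_eq, map_mul, weightedHomogeneousComponent_indicator_mul]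

lemma MvPolynomial.IsHomogeneous.weightedHomogeneousComponent {σ R M : Type*}
    [CommSemiring R] [AddCommMonoid M] {P : MvPolynomial σ R} {m : ℕ} (hP : P.IsHomogeneous m)
    (w : σ → M) (c : M) :
    (weightedHomogeneousComponent w c P).IsHomogeneous m := by
  classical
  intro e he
  rw [coeff_weightedHomogeneousComponent] at he
  split_ifs at he
  · exact hP he
  · exact absurd rfl he

lemma MvPolynomial.IsHomogeneous.polarize {f : MvPolynomial (Fin n) k} {m : ℕ}
    (hf : f.IsHomogeneous m) (E : Finset (Fin d)) : (polarize d E f).IsHomogeneous m :=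
  (isHomogeneous_sumSlots hf).weightedHomogeneousComponent _ _

lemma polarize_eq_zero_of_card_ne {f : MvPolynomial (Fin n) k} {m : ℕ}
    (hf : f.IsHomogeneous m) {E : Finset (Fin d)} (hE : E.card ≠ m) : polarize d E f = 0 := by
  rw [polarize_eq]
  refine weightedHomogeneousComponent_eq_zero' _ _ fun e he hwt => hE ?_
  rw [← sum_indicator, ← hwt, sum_weight_slotWeight, Finsupp.degree_eq_weight_one]
  exact isHomogeneous_sumSlots hf (mem_support_iff.mp he)

section SRank

variable {σ : Type*} {f : MvPolynomial σ k} {e r : ℕ}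

lemma SRankLE.of_eq_sum {ι : Type*} [Fintype ι] (g h : ι → MvPolynomial σ k)
    (hgh : ∀ i, ∃ a b : ℕ, 0 < a ∧ 0 < b ∧ a + b = e ∧
      (g i).IsHomogeneous a ∧ (h i).IsHomogeneous b)
    (hcard : Fintype.card ι = r) (hf : f = ∑ i, g i * h i) : SRankLE f e r := by
  let eqv := Fintype.equivFinOfCardEq hcard
  exact ⟨g ∘ eqv.symm, h ∘ eqv.symm, fun i => hgh _,
    hf.trans (eqv.symm.sum_comp fun i => g i * h i).symm⟩

lemma SRankLE.mono {r' : ℕ} (hf : SRankLE f e r) (hr : 0 < r) (hrr' : r ≤ r') :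
    SRankLE f e r' := by
  obtain ⟨g, h, hgh, rfl⟩ := hf
  obtain ⟨a, b, ha, hb, hab, -, -⟩ := hgh ⟨0, hr⟩
  refine .of_eq_sum (ι := Fin r ⊕ Fin (r' - r)) (Sum.elim g 0) (Sum.elim h 0) ?_
    (by simp only [Fintype.card_sum, Fintype.card_fin]; omega)
    (by simp [Fintype.sum_sum_type])
  rintro (i | i)
  · exact hgh i
  · exact ⟨a, b, ha, hb, hab, isHomogeneous_zero _ _ _, isHomogeneous_zero _ _ _⟩

lemma SRankLE.mono_mul_pow {A B x y : ℕ} (hf : SRankLE f e (A * x ^ B)) (hx : 0 < x)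
    (hxy : x ≤ y) : SRankLE f e (A * y ^ B) := by
  rcases A.eq_zero_or_pos with rfl | hA
  · simpa using hf
  · exact hf.mono (by positivity) (by gcongr)

end SRank

/-- Polarizing a product of forms splits the slots of `E` between the two factors, in
`2 ^ |E| ≤ 2 ^ d` ways. -/
lemma srankLE_polarize {f : MvPolynomial (Fin n) k} {e r : ℕ} (hf : SRankLE f e r)
    (E : Finset (Fin d)) : SRankLE (polarize d E f) e (2 ^ d * r) := by
  obtain ⟨g, h, hgh, rfl⟩ := hf
  refine .of_eq_sum (ι := Fin r × Finset (Fin d))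
    (fun p => if p.2 ⊆ E then polarize d p.2 (g p.1) else 0)
    (fun p => polarize d (E \ p.2) (h p.1)) ?_ (by simp [mul_comm]) ?_
  · rintro ⟨i, E₁⟩
    obtain ⟨a, b, ha, hb, hab, hga, hhb⟩ := hgh i
    refine ⟨a, b, ha, hb, hab, ?_, hhb.polarize _⟩
    split_ifs
    · exact hga.polarize _
    · exact isHomogeneous_zero _ _ _
  · rw [polarize_sum, Fintype.sum_prod_type]
    refine Finset.sum_congr rfl fun i _ => ?_
    simp only [ite_zero_mul, polarize_mul]
    rw [← Finset.sum_filter]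
    congr 1
    ext
    simp

lemma polarize_mem_of_mem_span {S : Set (MvPolynomial (Fin n) k)}
    {J : Ideal (MvPolynomial (Fin d × Fin n) k)} (hS : ∀ p ∈ S, ∀ E, polarize d E p ∈ J)
    {q : MvPolynomial (Fin n) k} (hq : q ∈ Ideal.span S) (E : Finset (Fin d)) :
    polarize d E q ∈ J := by
  induction hq using Submodule.span_induction generalizing E with
  | mem p hp => exact hS p hp E
  | zero => simpa only [polarize_zero] using J.zero_mem
  | add p q _ _ hp hq => simpa only [polarize_add] using J.add_mem (hp E) (hq E)
  | smul c p _ hp =>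
    rw [smul_eq_mul, polarize_mul]
    exact J.sum_mem fun E₁ _ => J.mul_mem_left _ (hp (E \ E₁))

lemma polarize_mem_span_polarizedLayers {h : ℕ} {deg sz : Fin h → ℕ}
    {F : (i : Fin h) → Fin (sz i) → MvPolynomial (Fin n) k}
    (hhom : ∀ i j, (F i j).IsHomogeneous (deg i)) {i : Fin h} {q : MvPolynomial (Fin n) k}
    (hq : q ∈ Ideal.span {p | ∃ (i' : Fin h) (j : Fin (sz i')), i' < i ∧ p = F i' j})
    (E : Finset (Fin d)) :
    polarize d E q ∈ Ideal.span {p | ∃ (i' : Fin h)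
      (j : Fin (sz i') × {E : Finset (Fin d) // E.card = deg i'}),
        i' < i ∧ p = polarize d j.2.1 (F i' j.1)} := by
  refine polarize_mem_of_mem_span ?_ hq E
  rintro _ ⟨i', j, hi', rfl⟩ E
  by_cases hE : E.card = deg i'
  · exact Ideal.subset_span ⟨i', (j, ⟨E, hE⟩), hi', rfl⟩
  · simp [polarize_eq_zero_of_card_ne (hhom i' j) hE]

end

theorem tower_regular_of_polarized_regular_general {k : Type*} [Field k] {n h d : ℕ}
    (deg sz : Fin h → ℕ)
    (F : (i : Fin h) → Fin (sz i) → MvPolynomial (Fin n) k)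
    (hhom : ∀ i j, (F i j).IsHomogeneous (deg i))
    (hle : ∀ i, deg i ≤ d)
    (A B t : ℕ)
    (hpol : TowerRegular
      (fun i => Fin (sz i) × {E : Finset (Fin d) // E.card = deg i}) deg
      (fun i p => polarize d p.2.1 (F i p.1)) (2 ^ d * A) B t) :
    TowerRegular (fun i => Fin (sz i)) deg F A B t := by
  have hslots (i) : Nonempty {E : Finset (Fin d) // E.card = deg i} :=
    Fintype.card_pos_iff.mp (by simpa [Fintype.card_finset_len] using Nat.choose_pos (hle i))
  rintro i a ha ⟨q, hqI, hqhom, hq⟩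
  obtain ⟨j₀, hj₀⟩ := Function.ne_iff.mp ha
  obtain ⟨E₀, hE₀⟩ := hslots i
  refine hpol i (fun p => if p.2 = ⟨E₀, hE₀⟩ then a p.1 else 0)
    (Function.ne_iff.mpr ⟨(j₀, ⟨E₀, hE₀⟩), by simpa using hj₀⟩)
    ⟨polarize d E₀ q, ?_, hqhom.polarize E₀, ?_⟩
  · exact polarize_mem_span_polarizedLayers hhom hqI E₀
  · have hcomb : ∑ p : Fin (sz i) × {E : Finset (Fin d) // E.card = deg i},
        C (if p.2 = ⟨E₀, hE₀⟩ then a p.1 else 0) * polarize d p.2.1 (F i p.1) =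
          polarize d E₀ (∑ j, C (a j) * F i j) := by
      simp [Fintype.sum_prod_type, apply_ite C, ite_mul, polarize_sum, polarize_C_mul]
    rw [hcomb, ← polarize_add]
    refine SRankLE.mono_mul_pow (by rw [mul_assoc]; exact srankLE_polarize hq E₀) ?_ ?_
    · calc 0 < Fintype.card (Fin (sz i)) := Fintype.card_pos_iff.mpr ⟨j₀⟩
        _ ≤ _ := Finset.single_le_sum (f := fun i' => Fintype.card (Fin (sz i')))
          (fun _ _ => Nat.zero_le _) (by simp)
        _ ≤ _ := Nat.le_add_right _ _
    · gcongr with i'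
      have := hslots i'
      exact Fintype.card_le_of_surjective _ Prod.fst_surjective

/-- let `F` be a tower of forms of degrees `d₁,…,d_h` with maximum
degree `d`.  If the polarized tower `F̃` is `(2^d·A, B, t)`-regular then `F` is
`(A,B,t)`-regular. -/
theorem tower_regular_of_polarized_regular {k : Type*} [Field k] {n h d : ℕ}
    (deg sz : Fin h → ℕ)
    (F : (i : Fin h) → Fin (sz i) → MvPolynomial (Fin n) k)
    (hhom : ∀ i j, (F i j).IsHomogeneous (deg i))
    (hle : ∀ i, deg i ≤ d) (hmax : ∃ i, deg i = d)
    (A B t : ℕ)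
    (hpol : TowerRegular
      (fun i => Fin (sz i) × {E : Finset (Fin d) // E.card = deg i}) deg
      (fun i p => polarize d p.2.1 (F i p.1)) (2 ^ d * A) B t) :
    TowerRegular (fun i => Fin (sz i)) deg F A B t :=
  tower_regular_of_polarized_regular_general deg sz F hhom hle A B t hpol
end

section
/- Suppose f is a bi-homogeneous polynomial in k[x,y] whose degree in y is not divisible by char(k), F is a tower of bi-homogeneous forms, and the directional derivative ∂_z f(x,y) := ∇_{(0,z)} f(x,y) satisfies rk_{I(T_z F)}(∂_z f) ≤ t, where T_z F = F ∪ ∂_z F'. Then rk_{I(F)}(f) ≤ t. -/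
open MvPolynomial

/-- Bi-homogeneous of bidegree `(a,b)` in the two groups of variables of
`k[x,y] = MvPolynomial (Fin n ⊕ Fin n) k`. -/
def BiHom {k : Type*} [Field k] {n : ℕ} (f : MvPolynomial (Fin n ⊕ Fin n) k)
    (a b : ℕ) : Prop :=
  IsWeightedHomogeneous (Sum.elim (fun _ => 1) (fun _ => 0)) f a ∧
  IsWeightedHomogeneous (Sum.elim (fun _ => 0) (fun _ => 1)) f b

/-- `∂_z f(x,y) = ∇_{(0,z)} f(x,y) ∈ k[x,y,z]`: the variables `z` are the second
summand of `(Fin n ⊕ Fin n) ⊕ Fin n`. -/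
noncomputable def dz {k : Type*} [Field k] {n : ℕ}
    (f : MvPolynomial (Fin n ⊕ Fin n) k) : MvPolynomial ((Fin n ⊕ Fin n) ⊕ Fin n) k :=
  ∑ i : Fin n, X (Sum.inr i) * rename Sum.inl (pderiv (Sum.inr i) f)

theorem X_mul_pderiv_monomial' {k : Type*} [Field k] {σ : Type*} [DecidableEq σ]
    (j : σ) (m : σ →₀ ℕ) (c : k) :
    X j * pderiv j (monomial m c) = monomial m (c * m j) := by
  rw [pderiv_monomial]
  by_cases h : m j = 0
  · simp [h]
  · rw [X, monomial_mul, one_mul, add_tsub_cancel_of_le (Finsupp.single_le_iff.mpr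
      (Nat.one_le_iff_ne_zero.mpr h))]

theorem weight_y {n : ℕ} (m : (Fin n ⊕ Fin n) →₀ ℕ) :
    Finsupp.weight (Sum.elim (fun _ => 0) (fun _ => 1) : Fin n ⊕ Fin n → ℕ) m
      = ∑ i : Fin n, m (Sum.inr i) := by
  rw [Finsupp.weight_apply, Finsupp.sum_fintype]
  · rw [Fintype.sum_sum_type]
    simp
  · intro i; simp

theorem euler_y {k : Type*} [Field k] {n : ℕ} {b : ℕ} {g : MvPolynomial (Fin n ⊕ Fin n) k}
    (hg : IsWeightedHomogeneous (Sum.elim (fun _ => 0) (fun _ => 1)) g b) :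
    ∑ i : Fin n, X (Sum.inr i) * pderiv (Sum.inr i) g = (b : k) • g := by
  conv_lhs => rw [← g.support_sum_monomial_coeff]
  simp only [map_sum, Finset.mul_sum]
  rw [Finset.sum_comm]
  have key : ∀ m ∈ g.support,
      (∑ i : Fin n, X (Sum.inr i) * pderiv (Sum.inr i) (monomial m (coeff m g)))
        = C (b : k) * monomial m (coeff m g) := by
    intro m hm
    calc ∑ i : Fin n, X (Sum.inr i) * pderiv (Sum.inr i) (monomial m (coeff m g))
        = ∑ i : Fin n, monomial m (coeff m g * m (Sum.inr i)) :=
          Finset.sum_congr rfl fun i _ => X_mul_pderiv_monomial' _ _ _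
      _ = monomial m (coeff m g * ∑ i : Fin n, (m (Sum.inr i) : k)) := by
          rw [Finset.mul_sum, map_sum]
      _ = C (b : k) * monomial m (coeff m g) := by
          have hs : (∑ i : Fin n, ((m (Sum.inr i) : k))) = (b : k) := by
            have hw := hg (Finsupp.mem_support_iff.mp hm)
            rw [weight_y m] at hw
            rw [← hw]; push_cast; ring
          rw [hs, C_mul_monomial, mul_comm]
  rw [Finset.sum_congr rfl key, ← Finset.mul_sum, g.support_sum_monomial_coeff,
    smul_eq_C_mul]

/-- The substitution `z := y` applied to `∂_z g` gives `(deg_y g) • g` (Euler). -/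
theorem rename_dz {k : Type*} [Field k] {n : ℕ} {b : ℕ} {g : MvPolynomial (Fin n ⊕ Fin n) k}
    (hg : IsWeightedHomogeneous (Sum.elim (fun _ => 0) (fun _ => 1)) g b) :
    rename (Sum.elim id Sum.inr : (Fin n ⊕ Fin n) ⊕ Fin n → Fin n ⊕ Fin n) (dz g)
      = (b : k) • g := by
  rw [dz, map_sum, ← euler_y hg]
  refine Finset.sum_congr rfl fun i _ => ?_
  rw [map_mul, rename_X, rename_rename]
  have : (Sum.elim id Sum.inr : (Fin n ⊕ Fin n) ⊕ Fin n → Fin n ⊕ Fin n) ∘ Sum.inl = id :=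
    funext fun v => rfl
  rw [this, rename_id]
  rfl

theorem SRankLE.rename' {k : Type*} [Field k] {σ τ : Type*} {f : MvPolynomial σ k} {d r : ℕ}
    (h : SRankLE f d r) (e : σ → τ) : SRankLE (rename e f) d r := by
  obtain ⟨g, h', hgh, hsum⟩ := h
  refine ⟨fun i => rename e (g i), fun i => rename e (h' i), fun i => ?_, ?_⟩
  · obtain ⟨a, b, ha, hb, hab, hga, hhb⟩ := hgh i
    exact ⟨a, b, ha, hb, hab, hga.rename_isHomogeneous, hhb.rename_isHomogeneous⟩
  · rw [hsum, map_sum]; simp [map_mul]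

theorem SRankLE.smul' {k : Type*} [Field k] {σ : Type*} {f : MvPolynomial σ k} {d r : ℕ}
    (h : SRankLE f d r) (c : k) : SRankLE (c • f) d r := by
  obtain ⟨g, h', hgh, hsum⟩ := h
  refine ⟨fun i => c • g i, h', fun i => ?_, ?_⟩
  · obtain ⟨a, b, ha, hb, hab, hga, hhb⟩ := hgh i
    refine ⟨a, b, ha, hb, hab, ?_, hhb⟩
    show (c • g i).IsHomogeneous a
    rw [smul_eq_C_mul]
    simpa using (isHomogeneous_C _ c).mul hga
  · rw [hsum, Finset.smul_sum]
    exact Finset.sum_congr rfl fun i _ => (smul_mul_assoc c _ _).symm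

/-- suppose `f ∈ k[x,y]` is bi-homogeneous of bidegree `(a,b)` with
`b` (the `y`-degree) not divisible by `char k`, `F` is a collection of bi-homogeneous
forms with `F'` those of positive `y`-degree, and
`rk_{I(T_z F)}(∂_z f) ≤ t`, where `T_z F = F ∪ ∂_z F'`.  Then `rk_{I(F)}(f) ≤ t`. -/
theorem relrank_le_of_relrank_dz_le {k : Type*} [Field k] {n N : ℕ}
    {a b : ℕ} (hb : 0 < b) (hchar : ¬ (ringChar k ∣ b))
    (f : MvPolynomial (Fin n ⊕ Fin n) k) (hf : BiHom f a b)
    (α β : Fin N → ℕ) (F : Fin N → MvPolynomial (Fin n ⊕ Fin n) k)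
    (hF : ∀ j, BiHom (F j) (α j) (β j))
    (t : ℕ)
    (hyp : SRankRelLE
      (Ideal.span ((Set.range fun j => rename Sum.inl (F j)) ∪
        {p | ∃ j, 0 < β j ∧ p = dz (F j)}))
      (dz f) (a + b) t) :
    SRankRelLE (Ideal.span (Set.range F)) f (a + b) t := by
  obtain ⟨q, hqI, hqhom, hq⟩ := hyp
  let e : (Fin n ⊕ Fin n) ⊕ Fin n → Fin n ⊕ Fin n := Sum.elim id Sum.inr
  have hbk : (b : k) ≠ 0 := by
    intro h0
    exact hchar ((CharP.cast_eq_zero_iff k (ringChar k) b).mp h0)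
  set c : k := (b : k)⁻¹ with hc
  -- the image of q lies in the span of F
  have hmem : rename e q ∈ Ideal.span (Set.range F) := by
    have hle : Ideal.span ((Set.range fun j => rename Sum.inl (F j)) ∪
        {p | ∃ j, 0 < β j ∧ p = dz (F j)}) ≤
        Ideal.comap (rename e : MvPolynomial ((Fin n ⊕ Fin n) ⊕ Fin n) k →ₐ[k] _).toRingHom
          (Ideal.span (Set.range F)) := by
      rw [Ideal.span_le]
      rintro p (⟨j, rfl⟩ | ⟨j, _, rfl⟩)
      · simp only [SetLike.mem_coe, Ideal.mem_comap, AlgHom.toRingHom_eq_coe,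
          RingHom.coe_coe]
        show rename e ((rename Sum.inl) (F j)) ∈ _
        rw [rename_rename]
        have he : e ∘ Sum.inl = id := funext fun v => rfl
        rw [he, rename_id]
        exact Ideal.subset_span ⟨j, rfl⟩
      · simp only [SetLike.mem_coe, Ideal.mem_comap, AlgHom.toRingHom_eq_coe,
          RingHom.coe_coe]
        show rename e (dz (F j)) ∈ _
        rw [show rename e (dz (F j)) = _ from rename_dz (hF j).2, smul_eq_C_mul]
        exact Ideal.mul_mem_left _ _ (Ideal.subset_span ⟨j, rfl⟩)
    exact hle hqI
  refine ⟨c • rename e q, ?_, ?_, ?_⟩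
  · rw [smul_eq_C_mul]
    exact Ideal.mul_mem_left _ _ hmem
  · rw [smul_eq_C_mul]
    simpa using (isHomogeneous_C _ c).mul hqhom.rename_isHomogeneous
  · have h1 : rename e (dz f + q) = (b : k) • f + rename e q := by
      rw [map_add, rename_dz hf.2]
    have h2 := (hq.rename' e).smul' c
    rw [h1, smul_add, smul_smul, inv_mul_cancel₀ hbk, one_smul] at h2
    exact h2
end
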